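/- arXiv:0812.0463 — 2 statements merged into one kernel-verified Lean document; each statement's English description precedes it below -/
import Mathlib

section
/- For every n, the number of involutions of {1,...,n} avoiding both 4321 and 213 equals 1 + ⌊n/2⌋·⌈n/2⌉. -/
def Av4321 {n : ℕ} (σ : Equiv.Perm (Fin n)) : Prop :=
  ¬ ∃ i j k l : Fin n, i < j ∧ j < k ∧ k < l ∧ σ l < σ k ∧ σ k < σ j ∧ σ j < σ i

def Av213 {n : ℕ} (σ : Equiv.Perm (Fin n)) : Prop :=
  ¬ ∃ i j k : Fin n, i < j ∧ j < k ∧ σ j < σ i ∧ σ i < σ k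

/-!
Let σ ≠ 1 be an involution avoiding 213 and 4321, `a` its least moved point and `b = σ a`.
Avoiding 213 at `a` sends every `k ≥ b` below `b`, and forces the points sent into `[b, n)` to
form an interval starting at `a`. Avoiding 4321 forbids nested arcs `σ j < σ i < i < j` of the
involution; this makes σ increasing on `[b, n)` and fixes every point between the two blocks.
Hence σ translates `[b, n)` onto `[a, a + (n - b))` and back, so the non-identity avoiders are
the block swaps with `b < n` and `n + a ≤ 2 * b`. Passing from `n` to `n + 2` adds the `n + 1`
swaps with `b = n + 1`, which gives `⌊n/2⌋ * ⌈n/2⌉` of them.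
-/

theorem Equiv.Perm.mul_self_eq_one_iff_involutive {α : Type*} {τ : Equiv.Perm α} :
    τ * τ = 1 ↔ Function.Involutive τ := by
  simp only [Equiv.Perm.ext_iff, Equiv.Perm.mul_apply, Equiv.Perm.one_apply, Function.Involutive]

/-- Exchanges the blocks `[a, a + (n - b))` and `[b, n)` by translation and fixes every other
point; `n + a ≤ 2 * b` says that the two blocks are disjoint. -/
def blockSwapFun (n a b i : ℕ) : ℕ :=
  if a ≤ i ∧ i + b < n + a then i + b - a
  else if b ≤ i then i - b + a
  else i

section BlockSwap

variable {n a b : ℕ}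

theorem blockSwapFun_lt (h : n + a ≤ 2 * b) {i : ℕ} (hi : i < n) :
    blockSwapFun n a b i < n := by
  unfold blockSwapFun; split_ifs <;> omega

theorem blockSwapFun_blockSwapFun (h : n + a ≤ 2 * b) {i : ℕ} (hi : i < n) :
    blockSwapFun n a b (blockSwapFun n a b i) = i := by
  unfold blockSwapFun; split_ifs <;> omega

def blockSwap (n a b : ℕ) (h : n + a ≤ 2 * b) : Equiv.Perm (Fin n) :=
  Function.Involutive.toPerm (fun i => ⟨blockSwapFun n a b i, blockSwapFun_lt h i.isLt⟩)
    fun i => Fin.ext (blockSwapFun_blockSwapFun h i.isLt)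

theorem blockSwap_apply_val (h : n + a ≤ 2 * b) (i : Fin n) :
    (blockSwap n a b h i : ℕ) = blockSwapFun n a b i := rfl

theorem blockSwap_involutive (h : n + a ≤ 2 * b) : Function.Involutive (blockSwap n a b h) :=
  Function.Involutive.toPerm_involutive _

theorem av213_blockSwap (h : n + a ≤ 2 * b) : Av213 (blockSwap n a b h) := by
  rintro ⟨i, j, k, hij, hjk, h1, h2⟩
  simp only [Fin.lt_def, blockSwap_apply_val, blockSwapFun] at *
  split_ifs at h1 h2 <;> omega

theorem av4321_blockSwap (h : n + a ≤ 2 * b) : Av4321 (blockSwap n a b h) := by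
  rintro ⟨i, j, k, l, hij, hjk, hkl, h1, h2, h3⟩
  simp only [Fin.lt_def, blockSwap_apply_val, blockSwapFun] at *
  split_ifs at h1 h2 h3 <;> omega

theorem blockSwap_apply_eq (h : n + a ≤ 2 * b) {i : Fin n} (hi : (i : ℕ) = a) (hb : b < n) :
    (blockSwap n a b h i : ℕ) = b := by
  rw [blockSwap_apply_val, blockSwapFun]; split_ifs <;> omega

theorem blockSwap_injective {a b a' b' : ℕ} (h : n + a ≤ 2 * b) (h' : n + a' ≤ 2 * b')
    (hb : b < n) (hb' : b' < n) (heq : blockSwap n a b h = blockSwap n a' b' h') :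
    a = a' ∧ b = b' := by
  have key : ∀ i : Fin n, (blockSwap n a b h i : ℕ) = blockSwap n a' b' h' i := by
    simp [heq]
  wlog hle : a ≤ a' generalizing a b a' b'
  · have := this h' h hb' hb heq.symm (fun i => (key i).symm) (by omega)
    exact ⟨this.1.symm, this.2.symm⟩
  have := key ⟨a, by omega⟩
  simp only [blockSwap_apply_val, blockSwapFun] at this
  split_ifs at this <;> omega

end BlockSwap

section Patterns

variable {n : ℕ} {σ : Equiv.Perm (Fin n)}

theorem Av4321.not_nested (h4321 : Av4321 σ) (hσ : Function.Involutive σ) {i j : Fin n}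
    (hji : σ j < σ i) (hi : σ i < i) (hij : i < j) : False :=
  h4321 ⟨σ j, σ i, i, j, hji, hi, hij, by rw [hσ, hσ]; exact ⟨hji, hi, hij⟩⟩

theorem Av213.le_apply_of_lt_of_lt (h213 : Av213 σ) {a q p : Fin n} (haq : a < q) (hqp : q < p)
    (hp : σ a ≤ σ p) : σ a ≤ σ q := by
  refine le_of_not_gt fun hq => h213 ⟨a, q, p, haq, hqp, hq, hp.lt_of_ne ?_⟩
  exact fun h => (haq.trans hqp).ne (σ.injective h)

end Patterns

namespace AvoidingInvolution

variable {n : ℕ} {σ : Equiv.Perm (Fin n)} {a : Fin n}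

theorem le_of_apply_ne (hfix : ∀ i < a, σ i = i) {i : Fin n} (hi : σ i ≠ i) : a ≤ i := by
  by_contra! h; exact hi (hfix i h)

theorem lt_apply_of_forall_lt (hσ : Function.Involutive σ) (hmoved : σ a ≠ a)
    (hfix : ∀ i < a, σ i = i) : a < σ a :=
  (le_of_apply_ne hfix (i := σ a) (by rwa [hσ, ne_comm])).lt_of_ne' hmoved

theorem apply_lt_of_le (h213 : Av213 σ) (hσ : Function.Involutive σ) (hmoved : σ a ≠ a)
    (hfix : ∀ i < a, σ i = i) {k : Fin n} (hk : σ a ≤ k) : σ k < σ a := by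
  have hab := lt_apply_of_forall_lt hσ hmoved hfix
  rcases hk.eq_or_lt with rfl | hk
  · rwa [hσ]
  refine lt_of_not_ge fun hle => h213 ⟨a, σ a, k, hab, hk, by rwa [hσ], hle.lt_of_ne ?_⟩
  exact fun h => (hab.trans hk).ne' (σ.injective h).symm

theorem strictMonoOn_Ici (h4321 : Av4321 σ) (h213 : Av213 σ) (hσ : Function.Involutive σ)
    (hmoved : σ a ≠ a) (hfix : ∀ i < a, σ i = i) : StrictMonoOn σ (Set.Ici (σ a)) := by
  intro i hi j _ hij
  refine lt_of_not_ge fun hle => h4321.not_nested hσ (hle.lt_of_ne ?_) ?_ hij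
  · exact fun h => hij.ne (σ.injective h).symm
  · exact (apply_lt_of_le h213 hσ hmoved hfix hi).trans_le hi

theorem apply_val_eq_of_le (h4321 : Av4321 σ) (h213 : Av213 σ) (hσ : Function.Involutive σ)
    (hmoved : σ a ≠ a) (hfix : ∀ i < a, σ i = i) {i : Fin n} (hi : σ a ≤ i) :
    (σ i : ℕ) = a + (i - σ a) := by
  have hmono := strictMonoOn_Ici h4321 h213 hσ hmoved hfix
  obtain ⟨t, ht⟩ : ∃ t, (i : ℕ) = σ a + t := ⟨i - σ a, by omega⟩
  induction t generalizing i with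
  | zero =>
    obtain rfl : i = σ a := Fin.ext (by simpa using ht)
    rw [hσ]; omega
  | succ t ih =>
    set j : Fin n := ⟨σ a + t, by omega⟩
    have hj : σ a ≤ j := Fin.le_def.mpr (by simp [j])
    have hσj : (σ j : ℕ) = a + t := by have := ih hj rfl; simp only [j] at this ⊢; omega
    have hji : σ j < σ i := hmono hj hi (Fin.lt_def.mpr (by simp only [j]; omega))
    by_contra hne
    -- otherwise `q` is sent into `[σ a, n)`, to a point strictly between `j` and `i`
    set q : Fin n := ⟨a + t + 1, by omega⟩
    have hq : σ a ≤ σ q :=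
      h213.le_apply_of_lt_of_lt (Fin.lt_def.mpr (by simp only [q]; omega))
        (q := q) (p := σ i) (Fin.lt_def.mpr (by simp only [q]; omega)) (by rwa [hσ])
    rcases le_or_gt (σ q) j with hle | hlt
    · have := (hmono.le_iff_le hq hj).mpr hle
      rw [hσ] at this; simp only [q, Fin.le_def] at this; omega
    · have hiq : i ≤ σ q := Fin.le_def.mpr (by simp only [j, Fin.lt_def] at hlt; omega)
      have := (hmono.le_iff_le hi hq).mpr hiq
      rw [hσ] at this; simp only [q, Fin.le_def] at this; omega

theorem add_le_two_mul_apply (h4321 : Av4321 σ) (h213 : Av213 σ) (hσ : Function.Involutive σ)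
    (hmoved : σ a ≠ a) (hfix : ∀ i < a, σ i = i) : n + a ≤ 2 * (σ a : ℕ) := by
  set last : Fin n := ⟨n - 1, by omega⟩
  have hlast : σ a ≤ last := Fin.le_def.mpr (by simp only [last]; omega)
  have hlt := Fin.lt_def.mp (apply_lt_of_le h213 hσ hmoved hfix hlast)
  rw [apply_val_eq_of_le h4321 h213 hσ hmoved hfix hlast] at hlt
  simp only [last] at hlt
  omega

theorem apply_eq_self_of_le_of_lt (h4321 : Av4321 σ) (h213 : Av213 σ)
    (hσ : Function.Involutive σ) (hmoved : σ a ≠ a) (hfix : ∀ i < a, σ i = i) {m : Fin n}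
    (hm : (a : ℕ) + (n - σ a) ≤ m) (hmb : m < σ a) : σ m = m := by
  by_contra hne
  have hσm : σ m < σ a := lt_of_not_ge fun h => by
    have := apply_val_eq_of_le h4321 h213 hσ hmoved hfix h
    rw [hσ] at this
    omega
  have ham : a < σ m := by
    refine (le_of_apply_ne hfix (i := σ m) (by rwa [hσ, ne_comm])).lt_of_ne fun h => ?_
    rw [h, hσ] at hmb
    exact lt_irrefl _ hmb
  rcases lt_or_gt_of_ne hne with h | h
  · exact h4321.not_nested hσ (i := m) (j := σ a) (by rwa [hσ]) h hmb
  · exact h4321.not_nested hσ (i := σ m) (j := σ a) (by rw [hσ, hσ]; omega) (by rwa [hσ])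
      hσm

theorem eq_blockSwap (h4321 : Av4321 σ) (h213 : Av213 σ) (hσ : Function.Involutive σ)
    (hmoved : σ a ≠ a) (hfix : ∀ i < a, σ i = i) :
    ∃ h : n + a ≤ 2 * (σ a : ℕ), σ = blockSwap n a (σ a) h := by
  have hab := lt_apply_of_forall_lt hσ hmoved hfix
  have hshift {i : Fin n} (hi : σ a ≤ i) := apply_val_eq_of_le h4321 h213 hσ hmoved hfix hi
  refine ⟨add_le_two_mul_apply h4321 h213 hσ hmoved hfix, Equiv.ext fun i => Fin.ext ?_⟩
  rw [blockSwap_apply_val, blockSwapFun]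
  split_ifs with hleft hright
  · set j : Fin n := ⟨i + σ a - a, by omega⟩
    have hj : σ a ≤ j := Fin.le_def.mpr (by simp only [j]; omega)
    have hσj : σ j = i := Fin.ext (by rw [hshift hj]; simp only [j]; omega)
    have hσi : σ i = j := by rw [← hσj, hσ]
    rw [hσi]
  · exact hshift (Fin.le_def.mpr hright) |>.trans (by omega)
  · rcases lt_or_ge i a with hia | hia
    · rw [hfix i hia]
    · rw [apply_eq_self_of_le_of_lt h4321 h213 hσ hmoved hfix (by omega) (by omega)]

end AvoidingInvolution

def blockSwapParams (n : ℕ) : Finset (ℕ × ℕ) :=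
  (Finset.range n ×ˢ Finset.range n).filter fun q => n + q.1 ≤ 2 * q.2

theorem mem_blockSwapParams {n : ℕ} {q : ℕ × ℕ} :
    q ∈ blockSwapParams n ↔ q.1 < n ∧ q.2 < n ∧ n + q.1 ≤ 2 * q.2 := by
  simp [blockSwapParams, and_assoc]

theorem card_blockSwapParams_add_two (n : ℕ) :
    (blockSwapParams (n + 2)).card = (blockSwapParams n).card + (n + 1) := by
  have hsplit : blockSwapParams (n + 2) =
      (blockSwapParams n).map (.prodMap (.refl ℕ) (addRightEmbedding 1)) ∪
        (Finset.range (n + 1)).map (.sectL ℕ (n + 1)) := by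
    ext ⟨a, b⟩
    simp only [Finset.mem_union, Finset.mem_map, mem_blockSwapParams, Finset.mem_range,
      Function.Embedding.coe_prodMap, Function.Embedding.refl_apply, addRightEmbedding_apply,
      Function.Embedding.sectL_apply, Prod.map_apply, Prod.exists, Prod.mk.injEq]
    constructor
    · rintro ⟨ha, hb, h⟩
      rcases Nat.lt_succ_iff_lt_or_eq.mp hb with hb | rfl
      · exact .inl ⟨a, b - 1, by omega⟩
      · exact .inr ⟨a, by omega⟩
    · rintro (⟨a, b, h, rfl, rfl⟩ | ⟨a, h, rfl, rfl⟩) <;> omega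
  have hdisj : Disjoint ((blockSwapParams n).map (.prodMap (.refl ℕ) (addRightEmbedding 1)))
      ((Finset.range (n + 1)).map (.sectL ℕ (n + 1))) := by
    simp only [Finset.disjoint_left, Finset.mem_map, mem_blockSwapParams, Finset.mem_range]
    rintro _ ⟨⟨a, b⟩, h, rfl⟩ ⟨c, hc, hcab⟩
    simp only [Function.Embedding.coe_prodMap, Function.Embedding.refl_apply,
      addRightEmbedding_apply, Function.Embedding.sectL_apply, Prod.map_apply,
      Prod.mk.injEq] at hcab
    omega
  rw [hsplit, Finset.card_union_of_disjoint hdisj, Finset.card_map, Finset.card_map,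
    Finset.card_range]

theorem card_blockSwapParams : ∀ n, (blockSwapParams n).card = n / 2 * ((n + 1) / 2)
  | 0 => rfl
  | 1 => rfl
  | n + 2 => by
    rw [card_blockSwapParams_add_two, card_blockSwapParams n]
    have h1 : (n + 2) / 2 = n / 2 + 1 := by omega
    have h2 : (n + 2 + 1) / 2 = (n + 1) / 2 + 1 := by omega
    have h3 : n / 2 + (n + 1) / 2 = n := by omega
    rw [h1, h2]
    nlinarith

theorem av4321_one {n : ℕ} : Av4321 (1 : Equiv.Perm (Fin n)) :=
  fun ⟨_, _, _, _, _, _, hkl, hlk, _⟩ => lt_asymm hkl hlk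

theorem av213_one {n : ℕ} : Av213 (1 : Equiv.Perm (Fin n)) :=
  fun ⟨_, _, _, hij, _, hji, _⟩ => lt_asymm hij hji

def blockSwapOfParams (n : ℕ) (q : blockSwapParams n) : Equiv.Perm (Fin n) :=
  blockSwap n q.1.1 q.1.2 (mem_blockSwapParams.mp q.2).2.2

theorem blockSwapOfParams_injective (n : ℕ) : Function.Injective (blockSwapOfParams n) := by
  rintro ⟨⟨a, b⟩, hq⟩ ⟨⟨a', b'⟩, hq'⟩ heq
  rw [mem_blockSwapParams] at hq hq'
  obtain ⟨rfl, rfl⟩ := blockSwap_injective _ _ hq.2.1 hq'.2.1 heq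
  rfl

theorem one_notMem_range_blockSwapOfParams (n : ℕ) :
    1 ∉ Set.range (blockSwapOfParams n) := by
  rintro ⟨⟨⟨a, b⟩, hq⟩, heq⟩
  rw [mem_blockSwapParams] at hq
  have := blockSwap_apply_eq hq.2.2 (i := ⟨a, hq.1⟩) rfl hq.2.1
  simp only [blockSwapOfParams] at heq
  rw [heq] at this
  simp only [Equiv.Perm.one_apply] at this
  omega

theorem setOf_involutive_avoiding_eq (n : ℕ) :
    {τ : Equiv.Perm (Fin n) | τ * τ = 1 ∧ Av4321 τ ∧ Av213 τ} =
      insert 1 (Set.range (blockSwapOfParams n)) := by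
  ext τ
  simp only [Set.mem_ofPred_eq, Set.mem_insert_iff, Set.mem_range,
    Equiv.Perm.mul_self_eq_one_iff_involutive]
  constructor
  · rintro ⟨hτ, h4321, h213⟩
    by_cases hone : τ = 1
    · exact .inl hone
    obtain ⟨i, hi⟩ : ∃ i, τ i ≠ i := by
      by_contra! h; exact hone (Equiv.ext h)
    obtain ⟨a, hmoved, hmin⟩ := wellFounded_lt.has_min {i | τ i ≠ i} ⟨i, hi⟩
    have hfix : ∀ i < a, τ i = i := fun i hia => by_contra fun h => hmin i h hia
    obtain ⟨h, hτ_eq⟩ := AvoidingInvolution.eq_blockSwap h4321 h213 hτ hmoved hfix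
    have hq : (a.val, (τ a).val) ∈ blockSwapParams n :=
      mem_blockSwapParams.mpr ⟨a.isLt, (τ a).isLt, h⟩
    exact .inr ⟨⟨_, hq⟩, hτ_eq.symm⟩
  · rintro (rfl | ⟨⟨⟨a, b⟩, hq⟩, rfl⟩)
    · exact ⟨fun _ => rfl, av4321_one, av213_one⟩
    · exact ⟨blockSwap_involutive _, av4321_blockSwap _, av213_blockSwap _⟩

theorem card_involutions_avoiding_4321_213 (n : ℕ) :
    Nat.card {τ : Equiv.Perm (Fin n) // τ * τ = 1 ∧ Av4321 τ ∧ Av213 τ} =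
      1 + (n / 2) * ((n + 1) / 2) := by
  calc Nat.card {τ : Equiv.Perm (Fin n) // τ * τ = 1 ∧ Av4321 τ ∧ Av213 τ}
      = (insert 1 (Set.range (blockSwapOfParams n))).ncard := by
        rw [← setOf_involutive_avoiding_eq, ← Nat.card_coe_set_eq]; rfl
    _ = 1 + (blockSwapParams n).card := by
        rw [Set.ncard_insert_of_notMem (one_notMem_range_blockSwapOfParams n),
          ← Nat.card_coe_set_eq, Nat.card_range_of_injective (blockSwapOfParams_injective n),
          Nat.card_eq_finsetCard, add_comm]
    _ = 1 + (n / 2) * ((n + 1) / 2) := by rw [card_blockSwapParams]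
end

section
/- The number of involutions of {1,...,n} avoiding the pattern 321 equals the central binomial coefficient C(n, ⌊n/2⌋). -/
/-!
Write an involution `τ` as the word whose `i`-th letter is an up step if `i < τ i`, a down step
if `τ i < i` and a flat step if `τ i = i`. The involution avoids 321 exactly when its arcs
`(i, τ i)` neither nest nor pass over a fixed point; such a matching joins the `k`-th up step to
the `k`-th down step, so it is recovered from its word, and the words that occur are exactly the
paths that stay weakly above the axis, end on it, and take flat steps only on it. The number of
such paths of length `n` starting at height `h` satisfies a Pascal-type recurrence in `n`, solved
by `n.choose ((n + h + 1) / 2)`; at `h = 0` this is `n.choose (n / 2)` by symmetry.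
-/

def Av321 {n : ℕ} (σ : Equiv.Perm (Fin n)) : Prop :=
  ¬ ∃ i j k : Fin n, i < j ∧ j < k ∧ σ k < σ j ∧ σ j < σ i

open Finset Function Equiv

inductive Step
  | up
  | down
  | flat
  deriving DecidableEq

def IsGroundedPath : ℕ → List Step → Prop
  | h, [] => h = 0
  | h, .up :: w => IsGroundedPath (h + 1) w
  | h + 1, .down :: w => IsGroundedPath h w
  | 0, .flat :: w => IsGroundedPath 0 w
  | _, _ => False

def groundedPaths : ℕ → ℕ → Finset (List Step)
  | 0, 0 => {[]}
  | 0, _ + 1 => ∅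
  | n + 1, 0 =>
    (groundedPaths n 1).image (List.cons .up) ∪ (groundedPaths n 0).image (List.cons .flat)
  | n + 1, h + 1 =>
    (groundedPaths n (h + 2)).image (List.cons .up) ∪ (groundedPaths n h).image (List.cons .down)

theorem mem_groundedPaths {n h : ℕ} {w : List Step} :
    w ∈ groundedPaths n h ↔ w.length = n ∧ IsGroundedPath h w := by
  induction n generalizing h w with
  | zero => cases h <;> cases w <;> simp [groundedPaths, IsGroundedPath]
  | succ n ih =>
    rcases w with _ | ⟨_ | _ | _, w⟩ <;> rcases h with _ | h <;>
      simp [groundedPaths, IsGroundedPath, ih]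

theorem card_groundedPaths (n h : ℕ) : #(groundedPaths n h) = n.choose ((n + h + 1) / 2) := by
  have hdisj {a b : Step} (hab : a ≠ b) (s t : Finset (List Step)) :
      Disjoint (s.image (List.cons a)) (t.image (List.cons b)) := by
    simp [disjoint_left, hab.symm]
  induction n generalizing h with
  | zero => cases h <;> simp [groundedPaths, Nat.choose_eq_zero_of_lt]
  | succ n ih =>
    rw [groundedPaths.eq_def]
    cases h with
    | zero =>
      rw [card_union_of_disjoint (hdisj (by decide) _ _),
        card_image_of_injective _ List.cons_injective,
        card_image_of_injective _ List.cons_injective, ih, ih, add_zero, add_zero]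
      obtain ⟨m, rfl | rfl⟩ := Nat.even_or_odd' n
      · rw [show (2 * m + 1 + 1) / 2 = m + 1 by omega, show (2 * m + 1) / 2 = m by omega,
          Nat.choose_succ_succ', add_comm]
      · rw [show (2 * m + 1 + 1 + 1) / 2 = m + 1 by omega,
          show (2 * m + 1 + 1) / 2 = m + 1 by omega, Nat.choose_succ_succ' (2 * m + 1),
          Nat.choose_symm_half]
    | succ h =>
      rw [card_union_of_disjoint (hdisj (by decide) _ _),
        card_image_of_injective _ List.cons_injective,
        card_image_of_injective _ List.cons_injective, ih, ih,
        show (n + 1 + (h + 1) + 1) / 2 = (n + h + 1) / 2 + 1 by omega,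
        show (n + (h + 2) + 1) / 2 = (n + h + 1) / 2 + 1 by omega, Nat.choose_succ_succ', add_comm]

theorem List.forall_getElem?_cons_eq_some {β : Type*} {a s : β} {w : List β} {P : ℕ → Prop} :
    (∀ i, (a :: w)[i]? = some s → P i) ↔ (a = s → P 0) ∧ ∀ i, w[i]? = some s → P (i + 1) := by
  constructor
  · intro h
    exact ⟨fun ha => h 0 (by simp [ha]), fun i hi => h (i + 1) (by simpa using hi)⟩
  · rintro ⟨h0, hs⟩ (_ | i) hi
    · exact h0 (by simpa using hi)
    · exact hs i (by simpa using hi)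

theorem isGroundedPath_iff {h : ℕ} {w : List Step} :
    IsGroundedPath h w ↔
      (∀ i, w[i]? = some .down → (w.take i).count .down < (w.take i).count .up + h) ∧
      (∀ i, w[i]? = some .flat → (w.take i).count .down = (w.take i).count .up + h) ∧
      w.count .down = w.count .up + h := by
  induction w generalizing h with
  | nil => simp [IsGroundedPath, eq_comm]
  | cons a w ih =>
    simp only [List.forall_getElem?_cons_eq_some, List.take_succ_cons, List.take_zero,
      List.count_cons, List.count_nil]
    rcases a with _ | _ | _ <;> rcases h with _ | h <;>
      simp [IsGroundedPath, ih, add_comm, add_left_comm, ← add_assoc]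

def IsGroundedWord {α : Type*} [LinearOrder α] [Fintype α] (c : α → Step) : Prop :=
  (∀ x, c x = .down → #{y | c y = .down ∧ y < x} < #{y | c y = .up ∧ y < x}) ∧
  (∀ x, c x = .flat → #{y | c y = .down ∧ y < x} = #{y | c y = .up ∧ y < x}) ∧
  #{y | c y = .down} = #{y | c y = .up}

theorem List.count_take_ofFn {β : Type*} [DecidableEq β] {n : ℕ} (c : Fin n → β) (s : β)
    (i : ℕ) : ((List.ofFn c).take i).count s = #{y | c y = s ∧ y.val < i} := by
  have hsum (l : List β) : l.count s = (l.map fun x => if x = s then 1 else 0).sum := by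
    induction l <;> simp [List.count_cons, add_comm, *]
  rw [hsum, List.map_take, List.map_ofFn, List.sum_take_ofFn, card_filter, sum_filter]
  exact sum_congr rfl fun y _ => by by_cases c y = s <;> simp [*]

theorem isGroundedPath_ofFn_iff {n : ℕ} (c : Fin n → Step) :
    IsGroundedPath 0 (List.ofFn c) ↔ IsGroundedWord c := by
  have hcount (s : Step) : (List.ofFn c).count s = #{y | c y = s} := by
    rw [← List.take_of_length_le (List.length_ofFn (f := c)).le, List.count_take_ofFn]
    simp
  simp only [isGroundedPath_iff, IsGroundedWord, List.count_take_ofFn, hcount, add_zero,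
    List.getElem?_ofFn, Fin.forall_iff, Option.dite_none_right_eq_some, Option.some.injEq,
    forall_exists_index, Fin.lt_def]

theorem card_groundedWords (n : ℕ) :
    Nat.card {c : Fin n → Step // IsGroundedWord c} = n.choose (n / 2) := by
  have hbij : Bijective fun c : {c : Fin n → Step // IsGroundedWord c} =>
      (⟨List.ofFn c.1, mem_groundedPaths.2 ⟨List.length_ofFn, (isGroundedPath_ofFn_iff _).2 c.2⟩⟩ :
        groundedPaths n 0) := by
    refine ⟨fun c d h => Subtype.ext (List.ofFn_injective (congrArg Subtype.val h)), ?_⟩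
    rintro ⟨w, hw⟩
    obtain ⟨rfl, hpath⟩ := mem_groundedPaths.1 hw
    exact ⟨⟨w.get, (isGroundedPath_ofFn_iff _).1 (by rwa [List.ofFn_get])⟩,
      Subtype.ext (List.ofFn_get w)⟩
  rw [Nat.card_congr (Equiv.ofBijective _ hbij), Nat.card_eq_finsetCard, card_groundedPaths,
    add_zero, ← Nat.choose_symm (Nat.div_le_self n 2)]
  congr 1
  omega

theorem card_filter_le_of_perm {β : Type*} [Fintype β] (τ : Perm β) {p q : β → Prop}
    [DecidablePred p] [DecidablePred q] (h : ∀ y, p y → q (τ y)) : #{y | p y} ≤ #{y | q y} :=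
  card_le_card_of_injOn τ (fun y hy => by simpa using h y (by simpa using hy)) τ.injective.injOn

theorem Equiv.Perm.mul_self_eq_one_iff_involutive_s7 {β : Type*} {τ : Perm β} :
    τ * τ = 1 ↔ Involutive τ := by
  simp [Perm.ext_iff, Involutive]

section Exchange

variable {β : Type*} [DecidableEq β] {A B : Finset β}

def exchange (e : A ≃ B) (hAB : Disjoint A B) : Perm β :=
  Involutive.toPerm
    (fun x => if hA : x ∈ A then e ⟨x, hA⟩ else if hB : x ∈ B then e.symm ⟨x, hB⟩ else x) <| by
    intro x
    by_cases hA : x ∈ A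
    · simp [hA, disjoint_right.1 hAB (e ⟨x, hA⟩).2]
    · by_cases hB : x ∈ B <;> simp [hA, hB]

variable (e : A ≃ B) (hAB : Disjoint A B)

theorem exchange_involutive : Involutive (exchange e hAB) :=
  Involutive.toPerm_involutive _

theorem exchange_apply_of_mem_left {x : β} (hx : x ∈ A) : exchange e hAB x = e ⟨x, hx⟩ :=
  dif_pos hx

theorem exchange_apply_of_mem_right {x : β} (hx : x ∈ B) : exchange e hAB x = e.symm ⟨x, hx⟩ :=
  (dif_neg (disjoint_right.1 hAB hx)).trans (dif_pos hx)

theorem exchange_apply_of_notMem {x : β} (hA : x ∉ A) (hB : x ∉ B) : exchange e hAB x = x :=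
  (dif_neg hA).trans (dif_neg hB)

end Exchange

section Rank

variable {β : Type*} [LinearOrder β] {A B : Finset β} (e : A ≃o B)

theorem card_filter_lt_orderIso_apply (a : A) :
    #{x ∈ B | x < (e a : β)} = #{x ∈ A | x < (a : β)} := by
  symm
  refine card_bij (fun x hx => (e ⟨x, (mem_filter.1 hx).1⟩ : β)) (fun x hx => ?_)
    (fun x hx y hy hxy => ?_) (fun y hy => ?_)
  · simp only [mem_filter] at hx ⊢
    exact ⟨(e _).2, e.lt_iff_lt.2 hx.2⟩
  · simpa using e.injective (Subtype.ext hxy)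
  · obtain ⟨hyB, hy⟩ := mem_filter.1 hy
    exact ⟨e.symm ⟨y, hyB⟩, mem_filter.2 ⟨(e.symm _).2, e.symm_apply_lt.2 hy⟩, by simp⟩

theorem lt_orderIso_apply (hAB : Disjoint A B)
    (hB : ∀ b ∈ B, #{x ∈ B | x < b} < #{x ∈ A | x < b}) (a : A) : (a : β) < e a := by
  by_contra! hle
  have hlt : (e a : β) < a := hle.lt_of_ne fun h => disjoint_left.1 hAB (h ▸ a.2) (e a).2
  have := hB _ (e a).2
  rw [card_filter_lt_orderIso_apply] at this
  exact this.not_ge (card_le_card (monotone_filter_right _ fun x _ hx => hx.trans hlt))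

theorem orderIso_apply_lt {x : β} (hx : x ∉ B) (hcard : #{y ∈ B | y < x} = #{y ∈ A | y < x})
    {a : A} (ha : (a : β) < x) : (e a : β) < x := by
  by_contra! hle
  have hlt : x < e a := hle.lt_of_ne fun h => hx (h ▸ (e a).2)
  have h1 : #{y ∈ B | y < x} ≤ #{y ∈ A | y < (a : β)} :=
    card_filter_lt_orderIso_apply e a ▸
      card_le_card (monotone_filter_right _ fun y _ hy => hy.trans hlt)
  have h2 : #{y ∈ A | y < (a : β)} < #{y ∈ A | y < x} :=
    card_lt_card <| (ssubset_iff_of_subset (monotone_filter_right _ fun y _ hy => hy.trans ha)).2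
      ⟨a, by simp [ha], by simp⟩
  omega

end Rank

section Involution

variable {α : Type*} [LinearOrder α]

def code (τ : Perm α) (i : α) : Step :=
  if i < τ i then .up else if τ i < i then .down else .flat

@[simp]
theorem code_eq_up {τ : Perm α} {i : α} : code τ i = .up ↔ i < τ i := by
  unfold code; split_ifs <;> simp [*]

@[simp]
theorem code_eq_down {τ : Perm α} {i : α} : code τ i = .down ↔ τ i < i := by
  unfold code; split_ifs <;> simp [*, le_of_lt]

@[simp]
theorem code_eq_flat {τ : Perm α} {i : α} : code τ i = .flat ↔ τ i = i := by
  unfold code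
  split_ifs with h₁ h₂
  · simp [h₁.ne']
  · simp [h₂.ne]
  · simpa using le_antisymm (not_lt.1 h₁) (not_lt.1 h₂)

/-- The arcs `(i, τ i)` do not nest, a fixed point counting as an arc of length zero. -/
def IsNonnesting (τ : Perm α) : Prop :=
  StrictMonoOn τ {i | i < τ i} ∧ ∀ i j, τ j = j → i < j → τ i < j

theorem av321_iff_isNonnesting {n : ℕ} {τ : Perm (Fin n)} (hτ : Involutive τ) :
    Av321 τ ↔ IsNonnesting τ := by
  constructor
  · intro h
    refine ⟨fun i hi j hj hij => ?_, fun i j hj hij => ?_⟩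
    · by_contra! hle
      have hlt : τ j < τ i := hle.lt_of_ne (τ.injective.ne hij.ne')
      exact h ⟨i, j, τ j, hij, hj, by rwa [hτ j], hlt⟩
    · by_contra! hle
      have hlt : j < τ i := hle.lt_of_ne fun h => hij.ne (by rw [← hτ i, ← h, hj])
      exact h ⟨i, j, τ i, hij, hlt, by rwa [hτ i, hj], by rwa [hj]⟩
  · rintro ⟨hmono, hcover⟩ ⟨i, j, k, hij, hjk, hkj, hji⟩
    rcases lt_trichotomy j (τ j) with hj | hj | hj
    · exact (hmono (show i < τ i by order) hj hij).not_gt hji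
    · exact (hcover i j hj.symm hij).not_gt (hj ▸ hji)
    · have hk : τ k < τ (τ k) := by rw [hτ k]; order
      have := hmono hk (show τ j < τ (τ j) by rwa [hτ j]) hkj
      rw [hτ, hτ] at this
      order

theorem isGroundedWord_code [Fintype α] {τ : Perm α} (hτ : Involutive τ) (h : IsNonnesting τ) :
    IsGroundedWord (code τ) := by
  simp only [IsGroundedWord, code_eq_up, code_eq_down, code_eq_flat]
  refine ⟨fun x hx => ?_, fun x hx => ?_, ?_⟩
  · calc #{y | τ y < y ∧ y < x} < #{y | τ y < y ∧ y ≤ x} :=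
          card_lt_card <| (ssubset_iff_of_subset <|
            monotone_filter_right _ fun y _ hy => ⟨hy.1, hy.2.le⟩).2 ⟨x, by simp [hx], by simp⟩
      _ ≤ #{y | y < τ y ∧ y < x} := card_filter_le_of_perm τ fun y hy => by
          rw [hτ y]; exact ⟨hy.1, hy.1.trans_le hy.2⟩
  · refine le_antisymm (card_filter_le_of_perm τ fun y hy => ?_)
      (card_filter_le_of_perm τ fun y hy => ?_)
    · rw [hτ y]; exact ⟨hy.1, hy.1.trans hy.2⟩
    · rw [hτ y]; exact ⟨hy.1, h.2 y x hx hy.2⟩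
  · exact le_antisymm (card_filter_le_of_perm τ fun y hy => by rwa [hτ y])
      (card_filter_le_of_perm τ fun y hy => by rwa [hτ y])

theorem range_domRestrict_excedances {τ : Perm α} (hτ : Involutive τ) :
    Set.range ({i | i < τ i}.domRestrict τ) = {i | τ i < i} := by
  ext y
  constructor
  · rintro ⟨⟨x, hx⟩, rfl⟩
    simpa [Set.domRestrict, hτ x] using hx
  · intro hy
    exact ⟨⟨τ y, by simpa [hτ y] using hy⟩, hτ y⟩

theorem code_injOn [WellFoundedLT α] :
    Set.InjOn code {τ : Perm α | Involutive τ ∧ IsNonnesting τ} := by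
  rintro τ ⟨hτ, hτmono, -⟩ σ ⟨hσ, hσmono, -⟩ hcode
  have hexc : {i | i < σ i} = {i | i < τ i} := by
    ext i; simp only [Set.mem_ofPred_eq, ← code_eq_up, hcode]
  rw [hexc] at hσmono
  have hrestrict : {i | i < τ i}.domRestrict τ = {i | i < τ i}.domRestrict σ := by
    refine (hτmono.domRestrict.range_inj hσmono.domRestrict).1 ?_
    rw [range_domRestrict_excedances hτ, ← hexc, range_domRestrict_excedances hσ]
    ext i; simp only [Set.mem_ofPred_eq, ← code_eq_down, hcode]
  ext i
  rcases lt_trichotomy i (τ i) with hi | hi | hi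
  · exact congrFun hrestrict ⟨i, hi⟩
  · rw [← hi, eq_comm, ← code_eq_flat, ← hcode, code_eq_flat, ← hi]
  · have hστ : σ (τ i) = i :=
      (congrFun hrestrict ⟨τ i, by rwa [Set.mem_ofPred_eq, hτ i]⟩).symm.trans (hτ i)
    conv_rhs => rw [← hστ, hσ]

theorem exists_isNonnesting_code_eq [Fintype α] {c : α → Step} (hc : IsGroundedWord c) :
    ∃ τ : Perm α, Involutive τ ∧ IsNonnesting τ ∧ code τ = c := by
  obtain ⟨hdown, hflat, hcard⟩ := hc
  set A : Finset α := {y | c y = .up} with hA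
  set B : Finset α := {y | c y = .down} with hB
  have hAB : Disjoint A B := disjoint_filter.2 fun y _ h => by simp [h]
  have hcardA (x : α) : #{y ∈ A | y < x} = #{y | c y = .up ∧ y < x} := by rw [filter_filter]
  have hcardB (x : α) : #{y ∈ B | y < x} = #{y | c y = .down ∧ y < x} := by rw [filter_filter]
  let e : A ≃o B := (A.orderIsoOfFin rfl).symm.trans (B.orderIsoOfFin hcard)
  have hlt (a : A) : (a : α) < e a :=
    lt_orderIso_apply e hAB
      (fun b hb => by rw [hcardA, hcardB]; exact hdown b (mem_filter.1 hb).2) a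
  set τ := exchange e.toEquiv hAB
  have hcode : code τ = c := by
    funext i
    rcases hi : c i with _ | _ | _
    · have hiA : i ∈ A := by simp [hA, hi]
      rw [code_eq_up, exchange_apply_of_mem_left _ _ hiA]
      exact hlt ⟨i, hiA⟩
    · have hiB : i ∈ B := by simp [hB, hi]
      rw [code_eq_down, exchange_apply_of_mem_right _ _ hiB]
      simpa using hlt (e.symm ⟨i, hiB⟩)
    · rw [code_eq_flat, exchange_apply_of_notMem] <;> simp [hA, hB, hi]
  refine ⟨τ, exchange_involutive _ _, ⟨?_, fun i j hj hij => ?_⟩, hcode⟩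
  · have hexc : {i | i < τ i} = (A : Set α) := by ext i; simp [hA, ← code_eq_up, hcode]
    rw [hexc]
    intro i hi j hj hij
    rw [exchange_apply_of_mem_left _ _ hi, exchange_apply_of_mem_left _ _ hj]
    exact e.strictMono hij
  · have hjc : c j = .flat := by rw [← hcode, code_eq_flat, hj]
    by_cases hiA : i ∈ A
    · rw [exchange_apply_of_mem_left _ _ hiA]
      exact orderIso_apply_lt e (by simp [hB, hjc]) (by rw [hcardA, hcardB]; exact hflat j hjc)
        (a := ⟨i, hiA⟩) hij
    · have : ¬ i < τ i := fun h => hiA (by simpa [hA, ← hcode] using h)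
      exact (not_lt.1 this).trans_lt hij

theorem card_nonnesting_involutions_eq_card_groundedWords [Fintype α] :
    Nat.card {τ : Perm α // Involutive τ ∧ IsNonnesting τ} =
      Nat.card {c : α → Step // IsGroundedWord c} := by
  refine Nat.card_congr (Equiv.ofBijective (fun τ => ⟨code τ.1, isGroundedWord_code τ.2.1 τ.2.2⟩)
    ⟨fun τ σ h => Subtype.ext (code_injOn τ.2 σ.2 (congrArg Subtype.val h)), fun c => ?_⟩)
  obtain ⟨τ, hτ, hτn, hcode⟩ := exists_isNonnesting_code_eq c.2
  exact ⟨⟨τ, hτ, hτn⟩, Subtype.ext hcode⟩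

end Involution

theorem card_involutions_avoiding_321 (n : ℕ) :
    Nat.card {τ : Equiv.Perm (Fin n) // τ * τ = 1 ∧ Av321 τ} =
      Nat.choose n (n / 2) := by
  have hiff (τ : Perm (Fin n)) : τ * τ = 1 ∧ Av321 τ ↔ Involutive τ ∧ IsNonnesting τ := by
    rw [Perm.mul_self_eq_one_iff_involutive_s7]
    exact and_congr_right av321_iff_isNonnesting
  rw [Nat.card_congr (Equiv.subtypeEquivRight hiff),
    card_nonnesting_involutions_eq_card_groundedWords, card_groundedWords]
end
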